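/- arXiv:1908.02112 — 2 statements merged into one kernel-verified Lean document; each statement's English description precedes it below -/
import Mathlib

section
/- For all integers d ≥ 1 and 0 ≤ k ≤ d, one has κ_{d-k}^d ≥ κ_d^{d-k}, where κ_n = π^{n/2}/Γ(1 + n/2) is the volume of the n-dimensional unit ball. Equivalently, Γ(1 + d/2)^{1/d} ≥ Γ(1 + (d-k)/2)^{1/(d-k)} for 0 ≤ k < d. -/
/-!
By Bohr–Mollerup, `x ↦ log Γ(1 + x / 2)` is convex on `[0, ∞)`, and it vanishes at `0`; hence its
secant slope from the origin, `log Γ(1 + x / 2) / x`, is nondecreasing. Exponentiating gives the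
second inequality, and also `Γ(1 + m/2)^d ≤ Γ(1 + d/2)^m` for `m ≤ d`, which is the first one
because the powers of `π` on both sides agree.
-/

open Real

/-- `κ n`, the volume of the `n`-dimensional unit ball. -/
noncomputable def unitBallVol (n : ℕ) : ℝ := π ^ ((n : ℝ) / 2) / Real.Gamma (1 + (n : ℝ) / 2)

lemma log_Gamma_one_add_half_div_le {x y : ℝ} (hx : 0 < x) (hxy : x ≤ y) :
    log (Gamma (1 + x / 2)) / x ≤ log (Gamma (1 + y / 2)) / y := by
  have hsecant := convexOn_log_Gamma.secant_mono (a := 1) (x := 1 + x / 2) (y := 1 + y / 2)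
    (by norm_num) (by simp; positivity) (by simp; linarith) (by simp; positivity)
    (by simp; linarith) (by linarith)
  simp only [Function.comp_apply, Gamma_one, log_one, sub_zero, add_sub_cancel_left,
    div_div_eq_mul_div] at hsecant
  rw [mul_div_right_comm, mul_div_right_comm] at hsecant
  linarith

lemma Gamma_one_add_half_rpow_inv_le {x y : ℝ} (hx : 0 < x) (hxy : x ≤ y) :
    Gamma (1 + x / 2) ^ (1 / x) ≤ Gamma (1 + y / 2) ^ (1 / y) := by
  rw [rpow_def_of_pos (Gamma_pos_of_pos (by positivity)),
    rpow_def_of_pos (Gamma_pos_of_pos (by linarith)), exp_le_exp, mul_one_div, mul_one_div]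
  exact log_Gamma_one_add_half_div_le hx hxy

lemma Gamma_one_add_half_pow_le {m n : ℕ} (hmn : m ≤ n) :
    Gamma (1 + (m : ℝ) / 2) ^ n ≤ Gamma (1 + (n : ℝ) / 2) ^ m := by
  rcases Nat.eq_zero_or_pos m with rfl | hm
  · simp
  have hm' : (0 : ℝ) < m := by exact_mod_cast hm
  have hmn' : (m : ℝ) ≤ n := by exact_mod_cast hmn
  have hlog := log_Gamma_one_add_half_div_le hm' hmn'
  rw [div_le_div_iff₀ hm' (hm'.trans_le hmn')] at hlog
  rw [← log_le_log_iff (by positivity) (by positivity), log_pow, log_pow]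
  linarith

lemma unitBallVol_pow_le {m n : ℕ} (hmn : m ≤ n) :
    unitBallVol n ^ m ≤ unitBallVol m ^ n := by
  have hnum : (π ^ ((n : ℝ) / 2)) ^ m = (π ^ ((m : ℝ) / 2)) ^ n := by
    rw [← rpow_mul_natCast pi_pos.le, ← rpow_mul_natCast pi_pos.le]
    ring_nf
  rw [unitBallVol, unitBallVol, div_pow, div_pow, hnum]
  exact div_le_div_of_nonneg_left (by positivity)
    (pow_pos (Gamma_pos_of_pos (by positivity)) n) (Gamma_one_add_half_pow_le hmn)

theorem unitBallVol_pow_ge_general (d k : ℕ) :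
    unitBallVol (d - k) ^ d ≥ unitBallVol d ^ (d - k) ∧
      (k < d →
        Real.Gamma (1 + (d : ℝ) / 2) ^ (1 / (d : ℝ)) ≥
          Real.Gamma (1 + ((d : ℝ) - (k : ℝ)) / 2) ^ (1 / ((d : ℝ) - (k : ℝ)))) := by
  refine ⟨unitBallVol_pow_le (Nat.sub_le d k), fun hkd => ?_⟩
  have hdk : (0 : ℝ) < d - k := sub_pos.mpr (by exact_mod_cast hkd)
  exact Gamma_one_add_half_rpow_inv_le hdk (sub_le_self _ k.cast_nonneg)

/-- For integers `d ≥ 1` and `0 ≤ k ≤ d` one has `κ_{d-k}^d ≥ κ_d^{d-k}`; equivalently,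
`Γ(1 + d/2)^(1/d) ≥ Γ(1 + (d-k)/2)^(1/(d-k))` for `0 ≤ k < d`. -/
theorem unitBallVol_pow_ge (d k : ℕ) (hd : 1 ≤ d) (hk : k ≤ d) :
    unitBallVol (d - k) ^ d ≥ unitBallVol d ^ (d - k) ∧
      (k < d →
        Real.Gamma (1 + (d : ℝ) / 2) ^ (1 / (d : ℝ)) ≥
          Real.Gamma (1 + ((d : ℝ) - (k : ℝ)) / 2) ^ (1 / ((d : ℝ) - (k : ℝ)))) :=
  unitBallVol_pow_ge_general d k
end

section
/- Let m ≥ 1 be an integer, γ > 0, μ > 0, and for each positive integer q let a_q ≥ 0 be given with a_q = 0 for q > m. Then ∑_{ℓ=1}^{∞} ((−1)^{ℓ−1} γ^ℓ / ℓ!) ∑_{q_1,…,q_ℓ ≥ 0, q_1+⋯+q_ℓ = m} ∏_{i=1}^{ℓ} b_{q_i} = −e^{−γμ} ∑_{p=1}^{m} ((−1)^p γ^p / p!) ∑_{q_1,…,q_p > 0, q_1+⋯+q_p = m} ∏_{i=1}^{p} a_{q_i}, where b_0 = μ and b_q = a_q for q ≥ 1, and the series on the left converges absolutely. -/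
/-!
Put `A = ∑_{q ≥ 1} a_q X^q`, so that `∑_q b_q X^q = μ + A`. The inner sum on the left is the
coefficient of `X^m` in `(μ + A)^ℓ`, which by the binomial theorem is
`∑_p C(ℓ,p) μ^(ℓ-p) [X^m] A^p`; here `[X^m] A^p` is the sum over compositions on the right, and it
vanishes unless `1 ≤ p ≤ m` because `A^p` has order at least `p`. For each such `p`,
`∑_ℓ (-γ)^ℓ/ℓ! C(ℓ,p) μ^(ℓ-p) = (-γ)^p/p! e^{-γμ}` is the exponential series shifted by `p`.
Absolute convergence comes for free: summability over `ℝ` is unconditional.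
-/

open Real Finset

section
open PowerSeries
variable {R : Type*} [CommSemiring R]

theorem PowerSeries.coeff_pow_eq_sum_antidiagonalTuple (φ : R⟦X⟧) (n m : ℕ) :
    coeff m (φ ^ n) = ∑ t ∈ Finset.Nat.antidiagonalTuple n m, ∏ i, coeff (t i) φ := by
  rw [← Fin.prod_const, coeff_prod, ← piAntidiag_univ_fin_eq_antidiagonalTuple, finsuppAntidiag,
    sum_map, ← sum_attach (piAntidiag _ _)]
  rfl

theorem sum_pos_antidiagonalTuple_prod_eq_coeff_pow (a : ℕ → R) (p m : ℕ) :
    ∑ t ∈ (Finset.Nat.antidiagonalTuple p m).filter (fun t => ∀ i, 0 < t i), ∏ i, a (t i) =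
      coeff m ((mk fun q => if q = 0 then 0 else a q) ^ p) := by
  have hpos : ∀ t ∈ Finset.Nat.antidiagonalTuple p m,
      ∏ i, coeff (t i) (mk fun q => if q = 0 then 0 else a q) ≠ 0 → ∀ i, 0 < t i := by
    intro t _ hne i
    by_contra! hi
    exact hne (prod_eq_zero (mem_univ i) (by simp [Nat.le_zero.mp hi]))
  rw [coeff_pow_eq_sum_antidiagonalTuple, ← sum_filter_of_ne hpos]
  refine sum_congr rfl fun t ht => prod_congr rfl fun i _ => ?_
  rw [coeff_mk, if_neg ((mem_filter.mp ht).2 i).ne']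

theorem sum_antidiagonalTuple_prod_ite_eq_sum_choose (μ : R) (a : ℕ → R) {m : ℕ} (hm : m ≠ 0) (n : ℕ) :
    ∑ t ∈ Finset.Nat.antidiagonalTuple n m, ∏ i, (if t i = 0 then μ else a (t i)) =
      ∑ p ∈ Icc 1 m, (n.choose p : R) * μ ^ (n - p) *
        coeff m ((mk fun q => if q = 0 then 0 else a q) ^ p) := by
  set A : R⟦X⟧ := mk fun q => if q = 0 then 0 else a q
  have hA : constantCoeff A = 0 := by simp [A, ← coeff_zero_eq_constantCoeff_apply]
  have hB : mk (fun q => if q = 0 then μ else a q) = A + C μ := by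
    ext (_ | q) <;> simp [A]
  have hvanish : ∀ p ∉ Icc 1 m, coeff m (A ^ p) = 0 := by
    intro p hp
    rcases Nat.eq_zero_or_pos p with rfl | hp0
    · simp [coeff_one, hm]
    · have hmp : m < p := by simp only [mem_Icc, not_and, not_le] at hp; exact hp hp0
      exact coeff_of_lt_order m <| (Nat.cast_lt.mpr hmp).trans_le
        (le_order_pow_of_constantCoeff_eq_zero p hA)
  let g p := (n.choose p : R) * μ ^ (n - p) * coeff m (A ^ p)
  calc ∑ t ∈ Finset.Nat.antidiagonalTuple n m, ∏ i, (if t i = 0 then μ else a (t i))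
      = coeff m ((A + C μ) ^ n) := by
        simp [← hB, coeff_pow_eq_sum_antidiagonalTuple, coeff_mk]
    _ = ∑ p ∈ range (n + 1), g p := by
        rw [add_pow, map_sum]
        refine sum_congr rfl fun p _ => ?_
        rw [← map_pow, ← map_natCast (C (R := R)), mul_assoc, ← map_mul, mul_comm, coeff_C_mul]
        ring
    _ = ∑ p ∈ range (n + 1) ∩ Icc 1 m, g p :=
        (sum_subset inter_subset_left fun p _ hp => by simp_all [g]).symm
    _ = ∑ p ∈ Icc 1 m, g p := sum_subset inter_subset_right fun p _ hp => by
        simp_all [g, Nat.choose_eq_zero_of_lt]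
end

theorem hasSum_pow_div_factorial_mul_choose (x y : ℝ) (p : ℕ) :
    HasSum (fun n => x ^ n / n.factorial * (n.choose p * y ^ (n - p)))
      (x ^ p / p.factorial * exp (x * y)) := by
  rw [← hasSum_nat_add_iff' p]
  have hlow : ∑ n ∈ range p, x ^ n / n.factorial * (n.choose p * y ^ (n - p)) = 0 :=
    sum_eq_zero fun n hn => by simp [Nat.choose_eq_zero_of_lt (mem_range.mp hn)]
  rw [hlow, sub_zero, exp_eq_exp_ℝ]
  refine ((NormedSpace.expSeries_div_hasSum_exp (x * y)).mul_left (x ^ p / p.factorial)).congr_fun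
    fun k => ?_
  rw [add_comm k p, Nat.cast_add_choose, Nat.add_sub_cancel_left]
  field_simp
  ring

theorem hasSum_pow_succ_div_factorial_mul_choose (x y : ℝ) {p : ℕ} (hp : p ≠ 0) :
    HasSum (fun ℓ : ℕ => x ^ (ℓ + 1) / (ℓ + 1).factorial * ((ℓ + 1).choose p * y ^ (ℓ + 1 - p)))
      (x ^ p / p.factorial * exp (x * y)) := by
  have h := (hasSum_nat_add_iff' 1).mpr (hasSum_pow_div_factorial_mul_choose x y p)
  rwa [sum_range_one, Nat.choose_eq_zero_of_lt (Nat.pos_of_ne_zero hp), Nat.cast_zero, zero_mul,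
    mul_zero, sub_zero] at h

theorem alternating_tuple_series_general (m : ℕ) (hm : 1 ≤ m) (γ μ : ℝ)
    (a : ℕ → ℝ) :
    Summable (fun ℓ : ℕ =>
        |(-1 : ℝ) ^ ℓ * γ ^ (ℓ + 1) / ((ℓ + 1).factorial : ℝ) *
          ∑ t ∈ Finset.Nat.antidiagonalTuple (ℓ + 1) m,
            ∏ i, (if t i = 0 then μ else a (t i))|) ∧
      (∑' ℓ : ℕ,
          (-1 : ℝ) ^ ℓ * γ ^ (ℓ + 1) / ((ℓ + 1).factorial : ℝ) *
            ∑ t ∈ Finset.Nat.antidiagonalTuple (ℓ + 1) m,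
              ∏ i, (if t i = 0 then μ else a (t i))) =
        -Real.exp (-(γ * μ)) *
          ∑ p ∈ Finset.Icc 1 m,
            (-1 : ℝ) ^ p * γ ^ p / (p.factorial : ℝ) *
              ∑ t ∈ (Finset.Nat.antidiagonalTuple p m).filter (fun t => ∀ i, 0 < t i),
                ∏ i, a (t i) := by
  refine (fun h => ⟨summable_abs_iff.mpr h.summable, h.tsum_eq⟩ : HasSum _ _ → _) ?_
  simp_rw [sum_antidiagonalTuple_prod_ite_eq_sum_choose μ a (by omega : m ≠ 0),
    sum_pos_antidiagonalTuple_prod_eq_coeff_pow, mul_sum]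
  refine hasSum_sum fun p hp => ?_
  set c := PowerSeries.coeff m ((PowerSeries.mk fun q => if q = 0 then 0 else a q) ^ p)
  have h := (hasSum_pow_succ_div_factorial_mul_choose (-γ) μ
    (by rw [mem_Icc] at hp; omega : p ≠ 0)).mul_left (-c)
  rw [show -exp (-(γ * μ)) * ((-1) ^ p * γ ^ p / p.factorial * c) =
    -c * ((-γ) ^ p / p.factorial * exp (-γ * μ)) by rw [neg_pow γ, neg_mul γ μ]; ring]
  exact h.congr_fun fun ℓ => by rw [neg_pow γ, pow_succ (-1 : ℝ)]; ring

/-- Evaluation of the alternating series over tuples of nonnegative integers summing to `m`: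
with `b_0 = μ`, `b_q = a_q` for `q ≥ 1`, and `a_q = 0` for `q > m`, one has
`∑_{ℓ≥1} ((−1)^{ℓ−1} γ^ℓ/ℓ!) ∑_{q_1+⋯+q_ℓ=m, q_i≥0} ∏ b_{q_i}
  = −e^{−γμ} ∑_{p=1}^{m} ((−1)^p γ^p/p!) ∑_{q_1+⋯+q_p=m, q_i>0} ∏ a_{q_i}`,
and the series converges absolutely. -/
theorem alternating_tuple_series (m : ℕ) (hm : 1 ≤ m) (γ μ : ℝ) (hγ : 0 < γ) (hμ : 0 < μ)
    (a : ℕ → ℝ) (ha : ∀ q, 0 ≤ a q) (ha' : ∀ q, m < q → a q = 0) :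
    Summable (fun ℓ : ℕ =>
        |(-1 : ℝ) ^ ℓ * γ ^ (ℓ + 1) / ((ℓ + 1).factorial : ℝ) *
          ∑ t ∈ Finset.Nat.antidiagonalTuple (ℓ + 1) m,
            ∏ i, (if t i = 0 then μ else a (t i))|) ∧
      (∑' ℓ : ℕ,
          (-1 : ℝ) ^ ℓ * γ ^ (ℓ + 1) / ((ℓ + 1).factorial : ℝ) *
            ∑ t ∈ Finset.Nat.antidiagonalTuple (ℓ + 1) m,
              ∏ i, (if t i = 0 then μ else a (t i))) =
        -Real.exp (-(γ * μ)) *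
          ∑ p ∈ Finset.Icc 1 m,
            (-1 : ℝ) ^ p * γ ^ p / (p.factorial : ℝ) *
              ∑ t ∈ (Finset.Nat.antidiagonalTuple p m).filter (fun t => ∀ i, 0 < t i),
                ∏ i, a (t i) :=
  alternating_tuple_series_general m hm γ μ a
end
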